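/- For all integers m ≥ 2 and n ≥ 1, the region D_n^m ⊆ ℝ² is a topological disk: the subspace D_n^m of ℝ² is homeomorphic to the closed unit disk {x ∈ ℝ² : ‖x‖ ≤ 1}. -/

import Mathlib

/-- The ruler sequence: `s i = v₂(i) + 1`. -/
def rulerSeq (i : ℕ) : ℕ := padicValNat 2 i + 1

/-- `yCoord i = y_i = ∑_{j=1}^{i-1} s j`. -/
def yCoord (i : ℕ) : ℕ := ∑ j ∈ Finset.Ico 1 i, rulerSeq j

/-- The `i`-th bar of `D_n^m`: `[(i-1)m, im] × [y_i, y_i + 1]`. -/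
def bar (m i : ℕ) : Set (ℝ × ℝ) :=
  Set.Icc (((i : ℝ) - 1) * m) ((i : ℝ) * m) ×ˢ Set.Icc ((yCoord i : ℝ)) ((yCoord i : ℝ) + 1)

/-- The `i`-th connector of `D_n^m`: `[im - 1, im] × [y_i + 1, y_{i+1} + 1]`. -/
def connector (m i : ℕ) : Set (ℝ × ℝ) :=
  Set.Icc ((i : ℝ) * m - 1) ((i : ℝ) * m) ×ˢ
    Set.Icc ((yCoord i : ℝ) + 1) ((yCoord (i + 1) : ℝ) + 1)

/-- The region `D_n^m`: union of `2^n` bars and `2^n - 1` connectors. -/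
def Dregion (n m : ℕ) : Set (ℝ × ℝ) :=
  (⋃ i ∈ Finset.Icc 1 (2 ^ n), bar m i) ∪ ⋃ i ∈ Finset.Icc 1 (2 ^ n - 1), connector m i

/-!
Sliding along the anti-diagonals, `(x, y) ↦ (x + σ (x + y), y - σ (x + y))`, is a homeomorphism
of the plane for every continuous `σ`, with inverse `(x, y) ↦ (x - σ (x + y), y + σ (x + y))`.
Take `σ` piecewise linear in `t = x + y`: constant `y k` while `t` runs through the `k`-th bar,
and rising with slope one from `y k` to `y (k + 1)` across the `k`-th connector. This slide carries
the staircase onto a `1`-high rectangle, and a rectangle, being a convex body, is a closed disk.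
-/

open Set Metric Bornology

@[simps]
def antidiagonalSlide {G : Type*} [AddCommGroup G] [TopologicalSpace G] [IsTopologicalAddGroup G]
    (σ : G → G) (hσ : Continuous σ) : G × G ≃ₜ G × G where
  toFun p := (p.1 + σ (p.1 + p.2), p.2 - σ (p.1 + p.2))
  invFun q := (q.1 - σ (q.1 + q.2), q.2 + σ (q.1 + q.2))
  left_inv p := by simp
  right_inv q := by simp
  continuous_toFun := by fun_prop
  continuous_invFun := by fun_prop

theorem exists_le_and_le_succ {α : Type*} [LinearOrder α] (a : ℕ → α) {x : α} {N : ℕ}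
    (hN : 0 < N) (h₀ : a 0 ≤ x) (hx : x ≤ a N) : ∃ k < N, a k ≤ x ∧ x ≤ a (k + 1) := by
  induction N, hN using Nat.le_induction with
  | base => exact ⟨0, one_pos, h₀, hx⟩
  | succ N _ ih =>
    rcases le_total x (a N) with h | h
    · obtain ⟨k, hk, hak⟩ := ih h
      exact ⟨k, hk.trans N.lt_succ_self, hak⟩
    · exact ⟨N, N.lt_succ_self, h, hx⟩

theorem max_min_cases {α : Type*} [LinearOrder α] {a b x : α} (hab : a ≤ b) :
    (max a (min x b) = a ∧ x ≤ a) ∨ (max a (min x b) = x ∧ a ≤ x ∧ x ≤ b) ∨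
      (max a (min x b) = b ∧ b ≤ x) := by
  rcases le_total x a with h | h
  · exact Or.inl ⟨by simp [h], h⟩
  rcases le_total x b with h' | h'
  · exact Or.inr (Or.inl ⟨by simp [h, h'], h, h'⟩)
  · exact Or.inr (Or.inr ⟨by simp [h', hab], h'⟩)

theorem Convex.nonempty_homeomorph_closedBall {E : Type*} [NormedAddCommGroup E]
    [NormedSpace ℝ E] {s : Set E} (hc : Convex ℝ s) (hcl : IsClosed s) (hb : IsBounded s)
    (hne : (interior s).Nonempty) : Nonempty (s ≃ₜ closedBall (0 : E) 1) := by
  obtain ⟨h, -, hclosure, -⟩ :=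
    exists_homeomorph_image_interior_closure_frontier_eq_unitBall hc hne hb
  rw [hcl.closure_eq] at hclosure
  exact ⟨(h.image s).trans (.setCongr hclosure)⟩

theorem nonempty_homeomorph_closedDisk_of_rectangle {a b c d : ℝ} (hab : a < b) (hcd : c < d) :
    Nonempty (Icc a b ×ˢ Icc c d ≃ₜ {x : EuclideanSpace ℝ (Fin 2) | ‖x‖ ≤ 1}) := by
  set e :=
    (ContinuousLinearEquiv.finTwoArrow ℝ ℝ).symm.trans (EuclideanSpace.equiv (Fin 2) ℝ).symm
  set R : Set (ℝ × ℝ) := Icc a b ×ˢ Icc c d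
  have hR : IsCompact (e '' R) := (isCompact_Icc.prod isCompact_Icc).image e.continuous
  have hint : (interior (e '' R)).Nonempty := by
    refine .mono (e.toHomeomorph.isOpenMap.image_interior_subset R) (.image _ ?_)
    rw [interior_prod_eq, interior_Icc, interior_Icc]
    exact (nonempty_Ioo.2 hab).prod (nonempty_Ioo.2 hcd)
  obtain ⟨f⟩ := ((convex_Icc a b).prod (convex_Icc c d)).linear_image e.toLinearMap
    |>.nonempty_homeomorph_closedBall hR.isClosed hR.isBounded hint
  exact ⟨(e.toHomeomorph.image R).trans (f.trans (.setCongr (by ext; simp)))⟩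

section Staircase

variable (y : ℕ → ℝ) (N : ℕ) (m : ℝ)

-- `Dregion n m` is `staircase (yCoord ·) (2 ^ n) m` by definition.
def staircase : Set (ℝ × ℝ) :=
  (⋃ i ∈ Finset.Icc 1 N, Icc (((i : ℝ) - 1) * m) (i * m) ×ˢ Icc (y i) (y i + 1)) ∪
    ⋃ i ∈ Finset.Icc 1 (N - 1), Icc ((i : ℝ) * m - 1) (i * m) ×ˢ Icc (y i + 1) (y (i + 1) + 1)

def staircaseShift (t : ℝ) : ℝ :=
  y 0 + ∑ j ∈ Finset.range (N + 1), (max (y j) (min (t - j * m) (y (j + 1))) - y j)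

theorem continuous_staircaseShift : Continuous (staircaseShift y N m) := by
  unfold staircaseShift
  fun_prop

variable {y N m}

theorem mem_staircase {p : ℝ × ℝ} :
    p ∈ staircase y N m ↔
      (∃ i, (1 ≤ i ∧ i ≤ N) ∧ (((i : ℝ) - 1) * m ≤ p.1 ∧ p.1 ≤ i * m) ∧
        y i ≤ p.2 ∧ p.2 ≤ y i + 1) ∨
      (∃ i, (1 ≤ i ∧ i ≤ N - 1) ∧ ((i : ℝ) * m - 1 ≤ p.1 ∧ p.1 ≤ i * m) ∧
        y i + 1 ≤ p.2 ∧ p.2 ≤ y (i + 1) + 1) := by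
  simp only [staircase, mem_union, mem_iUnion, Finset.mem_Icc, mem_prod, mem_Icc, exists_prop]

theorem staircase_congr {y' : ℕ → ℝ} (h : ∀ i, 1 ≤ i → i ≤ N → y i = y' i) :
    staircase y N m = staircase y' N m := by
  ext p
  simp only [mem_staircase]
  refine or_congr (exists_congr fun i ↦ and_congr_right fun hi ↦ ?_)
    (exists_congr fun i ↦ and_congr_right fun hi ↦ ?_)
  · rw [h i hi.1 hi.2]
  · rw [h i hi.1 (by omega), h (i + 1) (by omega) (by omega)]

theorem staircaseShift_eq (hy : Monotone y) (hm : 0 ≤ m) {k : ℕ} (hk : k ≤ N) {t : ℝ}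
    (ht₁ : ((k : ℝ) - 1) * m + y k ≤ t) (ht₂ : t ≤ ((k : ℝ) + 1) * m + y (k + 1)) :
    staircaseShift y N m t = max (y k) (min (t - k * m) (y (k + 1))) := by
  have hbelow : ∀ j ∈ Finset.range k,
      max (y j) (min (t - j * m) (y (j + 1))) - y j = y (j + 1) - y j := by
    intro j hj
    have hjk : (j : ℝ) + 1 ≤ k := by exact_mod_cast Finset.mem_range.1 hj
    have : y (j + 1) ≤ t - j * m := by nlinarith [hy (Finset.mem_range.1 hj : j + 1 ≤ k)]
    rw [min_eq_right this, max_eq_right (hy j.le_succ)]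
  have habove : ∀ j ∈ Finset.Ico (k + 1) (N + 1),
      max (y j) (min (t - j * m) (y (j + 1))) - y j = 0 := by
    intro j hj
    have hkj : (k : ℝ) + 1 ≤ j := by exact_mod_cast (Finset.mem_Ico.1 hj).1
    have : t - j * m ≤ y j := by nlinarith [hy (Finset.mem_Ico.1 hj).1]
    rw [max_eq_left ((min_le_left _ _).trans this), sub_self]
  rw [staircaseShift, ← Finset.sum_range_add_sum_Ico _ (Nat.succ_le_succ hk),
    Finset.sum_range_succ, Finset.sum_congr rfl hbelow, Finset.sum_congr rfl habove,
    Finset.sum_range_sub, Finset.sum_const_zero]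
  ring

theorem mem_staircase_of_mem_column (hN : y (N + 1) = y N) (hm : 1 ≤ m) {k : ℕ} (hk₁ : 1 ≤ k)
    (hkN : k ≤ N) {p : ℝ × ℝ} (hx : (k : ℝ) * m - 1 ≤ p.1 ∧ p.1 ≤ k * m)
    (hz : y k ≤ p.2 ∧ p.2 ≤ y (k + 1) + 1) : p ∈ staircase y N m := by
  rw [mem_staircase]
  by_cases hbar : p.2 ≤ y k + 1
  · exact Or.inl ⟨k, ⟨hk₁, hkN⟩, ⟨by linarith, hx.2⟩, hz.1, hbar⟩
  · have hk : k ≤ N - 1 := by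
      by_contra hk
      obtain rfl : k = N := by omega
      linarith [hz.2]
    exact Or.inr ⟨k, ⟨hk₁, hk⟩, hx, by linarith, hz.2⟩

theorem antidiagonalSlide_mem_rectangle (hy : Monotone y) (hN : y (N + 1) = y N) (hm : 1 ≤ m)
    {p : ℝ × ℝ} (hp : p ∈ staircase y N m) :
    antidiagonalSlide _ (continuous_staircaseShift y N m) p ∈
      Icc (y 1) (N * m + y N) ×ˢ Icc 0 1 := by
  obtain ⟨x, z⟩ := p
  simp only [antidiagonalSlide_apply, mem_prod, mem_Icc]
  rw [mem_staircase] at hp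
  rcases hp with ⟨k, ⟨hk₁, hkN⟩, ⟨hx₁, hx₂⟩, hz₁, hz₂⟩ | ⟨k, ⟨hk₁, hkN⟩, ⟨hx₁, hx₂⟩, hz₁, hz₂⟩
  all_goals
    have hkN : k ≤ N := by omega
    have hfirst : y 1 ≤ y k := hy hk₁
    have hstep : y k ≤ y (k + 1) := hy k.le_succ
    have hlast : y (k + 1) ≤ y N := by
      rcases hkN.lt_or_eq with hk | rfl
      exacts [hy hk, hN.le]
    have hleft : 0 ≤ ((k : ℝ) - 1) * m := mul_nonneg (by simp [hk₁]) (by linarith)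
    have hright : (k : ℝ) * m ≤ N * m := by gcongr
    rw [staircaseShift_eq hy (by linarith) hkN (by linarith) (by linarith)]
    rcases max_min_cases hstep with ⟨h, hc⟩ | ⟨h, hc⟩ | ⟨h, hc⟩ <;> rw [h] <;>
      refine ⟨⟨?_, ?_⟩, ?_, ?_⟩ <;> linarith

theorem antidiagonalSlide_symm_mem_staircase (hy : Monotone y) (hN : y (N + 1) = y N)
    (hN₀ : 0 < N) (hm : 1 ≤ m) {q : ℝ × ℝ} (hq : q ∈ Icc (y 1) (N * m + y N) ×ˢ Icc 0 1) :
    (antidiagonalSlide _ (continuous_staircaseShift y N m)).symm q ∈ staircase y N m := by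
  obtain ⟨u, v⟩ := q
  obtain ⟨⟨hu₁, hu₂⟩, hv₁, hv₂⟩ := hq
  -- the slide maps the `(k + 1)`-th bar and connector onto the part of the rectangle over
  -- `[k m + y (k + 1), (k + 1) m + y (k + 2)]`
  obtain ⟨k, hkN, hk₁, hk₂⟩ := exists_le_and_le_succ (fun k : ℕ ↦ k * m + y (k + 1)) hN₀
    (by simpa using hu₁) (by simpa [hN] using hu₂)
  simp only [Nat.cast_add, Nat.cast_one] at hk₁ hk₂
  have hstep : y (k + 1) ≤ y (k + 1 + 1) := hy (k + 1).le_succ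
  simp only [antidiagonalSlide_symm_apply]
  rw [staircaseShift_eq hy (by linarith) (k := k + 1) hkN (by push_cast; linarith)
    (by push_cast; linarith)]
  push_cast
  rcases max_min_cases hstep with ⟨h, hc⟩ | ⟨h, hc⟩ | ⟨h, hc⟩ <;> rw [h]
  · rw [mem_staircase]
    exact Or.inl ⟨k + 1, ⟨by omega, hkN⟩, by push_cast; constructor <;> linarith,
      by constructor <;> linarith⟩
  all_goals
    refine mem_staircase_of_mem_column hN hm (by omega) hkN ?_ ?_ <;>
      push_cast <;> constructor <;> linarith

theorem image_antidiagonalSlide_staircase (hy : Monotone y) (hN : y (N + 1) = y N)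
    (hN₀ : 0 < N) (hm : 1 ≤ m) :
    antidiagonalSlide _ (continuous_staircaseShift y N m) '' staircase y N m =
      Icc (y 1) (N * m + y N) ×ˢ Icc 0 1 :=
  (image_subset_iff.2 fun _ ↦ antidiagonalSlide_mem_rectangle hy hN hm).antisymm fun q hq ↦
    ⟨_, antidiagonalSlide_symm_mem_staircase hy hN hN₀ hm hq, Homeomorph.apply_symm_apply _ q⟩

theorem staircase_homeomorph_closedDisk (hy : Monotone y) (hN : 0 < N) (hm : 1 ≤ m) :
    Nonempty (staircase y N m ≃ₜ {x : EuclideanSpace ℝ (Fin 2) | ‖x‖ ≤ 1}) := by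
  -- freezing the heights after the last column flattens the last ramp of `staircaseShift`
  set y' : ℕ → ℝ := fun i ↦ y (min i N)
  have hy' : Monotone y' := fun i j hij ↦ hy (min_le_min_right N hij)
  have hstair : staircase y N m = staircase y' N m :=
    staircase_congr fun i _ hi ↦ by simp only [y', min_eq_left hi]
  have hwidth : y' 1 < N * m + y' N := by
    have : (0 : ℝ) < N * m := by positivity
    linarith [hy' (by omega : 1 ≤ N)]
  obtain ⟨f⟩ := nonempty_homeomorph_closedDisk_of_rectangle hwidth zero_lt_one
  rw [hstair]
  exact ⟨((antidiagonalSlide _ (continuous_staircaseShift y' N m)).image _).trans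
    ((Homeomorph.setCongr (image_antidiagonalSlide_staircase hy' (by simp [y']) hN hm)).trans f)⟩

end Staircase

theorem monotone_yCoord : Monotone yCoord := fun _ _ h ↦
  Finset.sum_le_sum_of_subset (Finset.Ico_subset_Ico le_rfl h)

theorem Dregion_homeomorphic_closedDisk_general (n m : ℕ) (hm : 2 ≤ m) :
    Nonempty
      ((Dregion n m) ≃ₜ ({x : EuclideanSpace ℝ (Fin 2) | ‖x‖ ≤ 1} : Set _)) :=
  staircase_homeomorph_closedDisk (Nat.mono_cast.comp monotone_yCoord) (by positivity)
    (by exact_mod_cast (by omega : 1 ≤ m))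

theorem Dregion_homeomorphic_closedDisk (n m : ℕ) (hn : 1 ≤ n) (hm : 2 ≤ m) :
    Nonempty
      ((Dregion n m) ≃ₜ ({x : EuclideanSpace ℝ (Fin 2) | ‖x‖ ≤ 1} : Set _)) :=
  Dregion_homeomorphic_closedDisk_general n m hm
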